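/- arXiv:2403.18400 — 2 statements merged into one kernel-verified Lean document; each statement's English description precedes it below -/
import Mathlib

section
/- Let A ∈ ℝ^{n×n} be a symmetric positive definite matrix with eigenvalue decomposition A = U·S·Uᵀ, where U is orthogonal and S is diagonal with strictly positive diagonal entries, and let ε > 0. Define the diagonal matrix Ŝ with entries Ŝ_{ii} = 1/(S_{ii} + ε). If U·Ŝ·S·Uᵀ has block-diagonal form (n₁, …, n_r), then U·S^{-1}·Ŝ·Uᵀ and U·S·Uᵀ = A also have block-diagonal form (n₁, …, n_r). -/
/-!
Block-diagonal matrices for `b` are the commutant of the block projections, a subalgebra closed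
under two-sided inverses. Pulling it back along the algebra homomorphism `f ↦ U (diag f) Uᵀ`
gives a subalgebra `T` of `Fin n → ℝ` closed under inverting nowhere-vanishing functions.
From `d / (d + ε) ∈ T` we get `ε / (d + ε) = 1 - d / (d + ε) ∈ T`, hence
`d = ε ((ε / (d + ε))⁻¹ - 1) ∈ T`, and finally `(d (d + ε))⁻¹ ∈ T`.
-/

open Matrix

def IsBlockDiag {n r : ℕ} (b : Fin n → Fin r) (A : Matrix (Fin n) (Fin n) ℝ) : Prop :=
  ∀ i j, b i ≠ b j → A i j = 0

section BlockDiag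

variable {n r : ℕ} (b : Fin n → Fin r)

def blockProj (c : Fin r) : Matrix (Fin n) (Fin n) ℝ :=
  diagonal fun i => if b i = c then 1 else 0

def blockDiagSubalgebra : Subalgebra ℝ (Matrix (Fin n) (Fin n) ℝ) :=
  Subalgebra.centralizer ℝ (Set.range (blockProj b))

variable {b} in
theorem mem_blockDiagSubalgebra {B : Matrix (Fin n) (Fin n) ℝ} :
    B ∈ blockDiagSubalgebra b ↔ IsBlockDiag b B := by
  simp only [blockDiagSubalgebra, Subalgebra.mem_centralizer_iff, Set.forall_mem_range]
  constructor
  · intro h i j hij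
    simpa [blockProj, hij] using (congrFun₂ (h (b j)) i j).symm
  · intro h c
    ext i j
    simp only [blockProj, mul_diagonal, diagonal_mul]
    by_cases hij : b i = b j
    · rw [hij, mul_comm]
    · simp [h i j hij]

end BlockDiag

theorem Subalgebra.mem_centralizer_of_mul_eq_one {R A : Type*} [CommSemiring R] [Semiring A]
    [Algebra R A] {s : Set A} {x y : A} (hx : x ∈ centralizer R s) (hxy : x * y = 1)
    (hyx : y * x = 1) : y ∈ centralizer R s := by
  rw [mem_centralizer_iff R] at hx ⊢
  exact fun g hg => (Commute.units_inv_right (u := ⟨x, y, hxy, hyx⟩) (hx g hg)).eq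

theorem Subalgebra.inv_mem_comap_centralizer {ι K A : Type*} [Semifield K] [Semiring A]
    [Algebra K A] (φ : (ι → K) →ₐ[K] A) {s : Set A} {f : ι → K}
    (h : f ∈ (centralizer K s).comap φ) (hf : ∀ i, f i ≠ 0) :
    f⁻¹ ∈ (centralizer K s).comap φ := by
  have hff : f * f⁻¹ = 1 := funext fun i => mul_inv_cancel₀ (hf i)
  refine mem_centralizer_of_mul_eq_one (R := K) (x := φ f) (y := φ f⁻¹) h ?_ ?_
  · rw [← map_mul, hff, map_one]
  · rw [← map_mul, mul_comm, hff, map_one]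

section InvClosed

variable {ι K : Type*} [Field K] {T : Subalgebra K (ι → K)}
  (hT : ∀ f ∈ T, (∀ i, f i ≠ 0) → f⁻¹ ∈ T) {d : ι → K} {ε : K}
include hT

theorem mem_of_inv_add_mul_mem (hε : ε ≠ 0) (hdε : ∀ i, d i + ε ≠ 0)
    (h : (fun i => (d i + ε)⁻¹ * d i) ∈ T) : d ∈ T := by
  have h_resolvent : (fun i => ε / (d i + ε)) ∈ T := by
    have : (fun i => ε / (d i + ε)) = 1 - fun i => (d i + ε)⁻¹ * d i := by
      funext i
      have := hdε i
      simp only [Pi.sub_apply, Pi.one_apply]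
      field_simp
      ring
    rw [this]
    exact T.sub_mem T.one_mem h
  have : d = ε • ((fun i => ε / (d i + ε))⁻¹ - 1) := by
    funext i
    have := hdε i
    simp only [Pi.sub_apply, Pi.smul_apply, Pi.inv_apply, Pi.one_apply, smul_eq_mul]
    field_simp
    ring
  rw [this]
  exact T.smul_mem (T.sub_mem (hT _ h_resolvent fun i => div_ne_zero hε (hdε i)) T.one_mem) ε

theorem inv_mul_inv_add_mem (hd : d ∈ T) (hd₀ : ∀ i, d i ≠ 0) (hdε : ∀ i, d i + ε ≠ 0) :
    (fun i => (d i)⁻¹ * (d i + ε)⁻¹) ∈ T := by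
  have h_prod : (fun i => d i * (d i + ε)) = d * d + ε • d := by
    funext i
    simp only [Pi.add_apply, Pi.mul_apply, Pi.smul_apply, smul_eq_mul]
    ring
  have h_inv : (fun i => (d i)⁻¹ * (d i + ε)⁻¹) = (fun i => d i * (d i + ε))⁻¹ :=
    funext fun i => (mul_inv _ _).symm
  rw [h_inv]
  refine hT _ ?_ fun i => mul_ne_zero (hd₀ i) (hdε i)
  rw [h_prod]
  exact T.add_mem (T.mul_mem hd hd) (T.smul_mem hd ε)

end InvClosed

def orthogonalConjDiagonal {n : ℕ} (U : unitary (Matrix (Fin n) (Fin n) ℝ)) :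
    (Fin n → ℝ) →ₐ[ℝ] Matrix (Fin n) (Fin n) ℝ :=
  (Unitary.conjStarAlgAut ℝ _ U : Matrix (Fin n) (Fin n) ℝ →ₐ[ℝ] _).comp (diagonalAlgHom ℝ)

theorem orthogonalConjDiagonal_apply {n : ℕ} (U : unitary (Matrix (Fin n) (Fin n) ℝ))
    (f : Fin n → ℝ) :
    orthogonalConjDiagonal U f =
      (U : Matrix (Fin n) (Fin n) ℝ) * diagonal f * (U : Matrix (Fin n) (Fin n) ℝ)ᵀ := by
  simp [orthogonalConjDiagonal, star_eq_conjTranspose]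

theorem stmt4_general {n r : ℕ} (b : Fin n → Fin r)
    (A U : Matrix (Fin n) (Fin n) ℝ) (d : Fin n → ℝ) (hd : ∀ i, 0 < d i)
    (hU : Uᵀ * U = 1) (hUU : U * Uᵀ = 1)
    (hAeig : A = U * Matrix.diagonal d * Uᵀ)
    (ε : ℝ) (hε : 0 < ε)
    (hblock : IsBlockDiag b
      (U * Matrix.diagonal (fun i => (d i + ε)⁻¹ * d i) * Uᵀ)) :
    IsBlockDiag b
      (U * Matrix.diagonal (fun i => (d i)⁻¹ * (d i + ε)⁻¹) * Uᵀ) ∧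
    IsBlockDiag b A := by
  let u : unitary (Matrix (Fin n) (Fin n) ℝ) :=
    ⟨U, by simp [Unitary.mem_iff, star_eq_conjTranspose, hU, hUU]⟩
  let T := (blockDiagSubalgebra b).comap (orthogonalConjDiagonal u)
  have mem_T (f : Fin n → ℝ) : f ∈ T ↔ IsBlockDiag b (U * diagonal f * Uᵀ) := by
    rw [Subalgebra.mem_comap, orthogonalConjDiagonal_apply, mem_blockDiagSubalgebra]
  have hT : ∀ f ∈ T, (∀ i, f i ≠ 0) → f⁻¹ ∈ T :=
    fun _ => Subalgebra.inv_mem_comap_centralizer _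
  have hd₀ (i : Fin n) : d i ≠ 0 := (hd i).ne'
  have hdε (i : Fin n) : d i + ε ≠ 0 := (add_pos (hd i) hε).ne'
  have h_d : d ∈ T := mem_of_inv_add_mul_mem hT hε.ne' hdε ((mem_T _).2 hblock)
  exact ⟨(mem_T _).1 (inv_mul_inv_add_mem hT h_d hd₀ hdε), hAeig ▸ (mem_T d).1 h_d⟩

/-- Let `A = U S Uᵀ` be symmetric positive definite (`U` orthogonal, `S = diag d`, `d > 0`),
let `ε > 0` and `Ŝ = diag (1 / (dᵢ + ε))`.  If `U Ŝ S Uᵀ` has block-diagonal form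
`(n₁, …, n_r)`, then so do `U S⁻¹ Ŝ Uᵀ` and `U S Uᵀ = A`. -/
theorem stmt4 {n r : ℕ} (b : Fin n → Fin r) (hb : Monotone b)
    (A U : Matrix (Fin n) (Fin n) ℝ) (d : Fin n → ℝ) (hd : ∀ i, 0 < d i)
    (hU : Uᵀ * U = 1) (hUU : U * Uᵀ = 1)
    (hAeig : A = U * Matrix.diagonal d * Uᵀ) (hA : A.PosDef)
    (ε : ℝ) (hε : 0 < ε)
    (hblock : IsBlockDiag b
      (U * Matrix.diagonal (fun i => (d i + ε)⁻¹ * d i) * Uᵀ)) :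
    IsBlockDiag b
      (U * Matrix.diagonal (fun i => (d i)⁻¹ * (d i + ε)⁻¹) * Uᵀ) ∧
    IsBlockDiag b A :=
  stmt4_general b A U d hd hU hUU hAeig ε hε hblock
end

section
/- Let W ∈ ℝ^{r×r} be diagonal with W₁₁ ≥ W₂₂ ≥ ⋯ ≥ W_{rr} > 0, let X ∈ ℝ^{m×n} have rank s with s ≤ r, and let X = U·Σ_X·Vᵀ be a reduced singular value decomposition, where U ∈ ℝ^{m×s} and V ∈ ℝ^{n×s} have orthonormal columns and Σ_X = diag(σ₁, …, σ_s) with σ₁ ≥ ⋯ ≥ σ_s > 0. Let W_X = diag(W₁₁, …, W_{ss}), and define Ã = [U·Σ_X^{1/2}·W_X^{1/2} , 0] ∈ ℝ^{m×r} and B̃ = [V·Σ_X^{1/2}·W_X^{-1/2} , 0] ∈ ℝ^{n×r} (padding with zero columns). Then Ã·B̃ᵀ = X and (1/2)(‖Ã·W^{-1}‖_F² + ‖B̃‖_F²) = Σ_{i=1}^{s} σ_i / W_{ii}. -/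
/-!
Padding with zero columns is right multiplication by the `s × r` matrix `P = [1, 0]`, for
which `P Pᵀ = 1` and `P diag(w) = diag(w₁, …, w_s) P`. Hence the padding disappears from
`Ã B̃ᵀ` and from `‖M‖_F² = tr (M Mᵀ)`, the factor `W⁻¹` moves inside the padding, and the
orthonormal columns of `U` and `V` drop out of the Frobenius norms. What is left are the
norms of the diagonal factors `σₖ^{1/2} wₖ^{1/2} / wₖ` and `σₖ^{1/2} wₖ^{-1/2}`, both equal
to `∑ σₖ / wₖ`.
-/

open Matrix

noncomputable def frobSq {m n : ℕ} (A : Matrix (Fin m) (Fin n) ℝ) : ℝ :=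
  ∑ i, ∑ j, (A i j) ^ 2

def padCols {m s r : ℕ} (h : s ≤ r) (M : Matrix (Fin m) (Fin s) ℝ) :
    Matrix (Fin m) (Fin r) ℝ :=
  Matrix.of fun i j => if hj : (j : ℕ) < s then M i ⟨j, hj⟩ else 0

def colIncl {s r : ℕ} (h : s ≤ r) : Matrix (Fin s) (Fin r) ℝ :=
  (1 : Matrix (Fin r) (Fin r) ℝ).submatrix (Fin.castLE h) id

section Padding

variable {m s r : ℕ} (h : s ≤ r)

theorem padCols_eq_mul_colIncl (M : Matrix (Fin m) (Fin s) ℝ) :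
    padCols h M = M * colIncl h := by
  ext i j
  simp only [padCols, colIncl, of_apply, mul_apply, submatrix_apply, id, one_apply, mul_ite,
    mul_one, mul_zero]
  split_ifs with hj
  · rw [Fintype.sum_eq_single ⟨j, hj⟩ fun k hk =>
      if_neg fun e => hk (Fin.ext (by simp [← e]))]
    exact (if_pos rfl).symm
  · refine (Finset.sum_eq_zero fun k _ => if_neg fun e => hj ?_).symm
    rw [← e]
    exact k.isLt

theorem colIncl_mul_transpose : colIncl h * (colIncl h)ᵀ = 1 := by
  ext k k'
  simp [colIncl, mul_apply, one_apply]

theorem colIncl_mul_diagonal (w : Fin r → ℝ) :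
    colIncl h * diagonal w = diagonal (fun k => w (Fin.castLE h k)) * colIncl h := by
  ext k j
  by_cases hkj : Fin.castLE h k = j <;> simp [colIncl, one_apply, hkj]

theorem padCols_mul_transpose_padCols {n : ℕ} (A : Matrix (Fin m) (Fin s) ℝ)
    (B : Matrix (Fin n) (Fin s) ℝ) : padCols h A * (padCols h B)ᵀ = A * Bᵀ := by
  rw [padCols_eq_mul_colIncl, padCols_eq_mul_colIncl, transpose_mul, Matrix.mul_assoc,
    ← Matrix.mul_assoc (colIncl h), colIncl_mul_transpose, Matrix.one_mul]

theorem padCols_mul_diagonal (M : Matrix (Fin m) (Fin s) ℝ) (w : Fin r → ℝ) :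
    padCols h M * diagonal w = padCols h (M * diagonal fun k => w (Fin.castLE h k)) := by
  rw [padCols_eq_mul_colIncl, padCols_eq_mul_colIncl, Matrix.mul_assoc, colIncl_mul_diagonal,
    Matrix.mul_assoc]

end Padding

section Frobenius

variable {m n : ℕ}

theorem frobSq_eq_trace (A : Matrix (Fin m) (Fin n) ℝ) : frobSq A = trace (A * Aᵀ) := by
  simp [frobSq, trace, mul_apply, sq]

theorem frobSq_padCols {s r : ℕ} (h : s ≤ r) (M : Matrix (Fin m) (Fin s) ℝ) :
    frobSq (padCols h M) = frobSq M := by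
  rw [frobSq_eq_trace, frobSq_eq_trace, padCols_mul_transpose_padCols]

theorem frobSq_mul_of_transpose_mul_self_eq_one {k : ℕ} {U : Matrix (Fin m) (Fin k) ℝ}
    (hU : Uᵀ * U = 1) (A : Matrix (Fin k) (Fin n) ℝ) : frobSq (U * A) = frobSq A := by
  rw [frobSq_eq_trace, frobSq_eq_trace, transpose_mul, Matrix.mul_assoc, trace_mul_comm,
    Matrix.mul_assoc, Matrix.mul_assoc, hU, Matrix.mul_one]

theorem frobSq_diagonal (d : Fin n → ℝ) : frobSq (diagonal d) = ∑ k, d k ^ 2 := by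
  simp [frobSq, diagonal_apply, apply_ite (· ^ 2)]

end Frobenius

theorem inv_diagonal_of_ne_zero {K n : Type*} [Field K] [Fintype n] [DecidableEq n]
    {w : n → K} (hw : ∀ i, w i ≠ 0) : (diagonal w)⁻¹ = diagonal fun i => (w i)⁻¹ := by
  refine inv_eq_right_inv ?_
  rw [diagonal_mul_diagonal, ← diagonal_one]
  exact congrArg diagonal (funext fun i => mul_inv_cancel₀ (hw i))

theorem stmt12_general {m n r s : ℕ}
    (w : Fin r → ℝ) (hw_pos : ∀ i, 0 < w i)
    (X : Matrix (Fin m) (Fin n) ℝ) (hsr : s ≤ r)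
    (U : Matrix (Fin m) (Fin s) ℝ) (V : Matrix (Fin n) (Fin s) ℝ)
    (hU : Uᵀ * U = 1) (hV : Vᵀ * V = 1)
    (σ : Fin s → ℝ) (hσ_pos : ∀ i, 0 < σ i)
    (hX : X = U * Matrix.diagonal σ * Vᵀ) :
    (padCols hsr (U * Matrix.diagonal
        (fun k => Real.sqrt (σ k) * Real.sqrt (w (Fin.castLE hsr k)))) *
      (padCols hsr (V * Matrix.diagonal
        (fun k => Real.sqrt (σ k) * (Real.sqrt (w (Fin.castLE hsr k)))⁻¹)))ᵀ = X) ∧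
    (1/2) * (frobSq (padCols hsr (U * Matrix.diagonal
        (fun k => Real.sqrt (σ k) * Real.sqrt (w (Fin.castLE hsr k)))) *
          (Matrix.diagonal w)⁻¹) +
      frobSq (padCols hsr (V * Matrix.diagonal
        (fun k => Real.sqrt (σ k) * (Real.sqrt (w (Fin.castLE hsr k)))⁻¹)))) =
      ∑ i, σ i / w (Fin.castLE hsr i) := by
  refine ⟨?_, ?_⟩
  · rw [padCols_mul_transpose_padCols, transpose_mul, diagonal_transpose, Matrix.mul_assoc,
      ← Matrix.mul_assoc (diagonal _), diagonal_mul_diagonal, hX, Matrix.mul_assoc]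
    congr 3
    funext k
    rw [mul_mul_mul_comm, Real.mul_self_sqrt (hσ_pos k).le,
      mul_inv_cancel₀ (Real.sqrt_pos.2 (hw_pos _)).ne', mul_one]
  · rw [inv_diagonal_of_ne_zero fun i => (hw_pos i).ne', padCols_mul_diagonal, frobSq_padCols,
      frobSq_padCols, Matrix.mul_assoc, diagonal_mul_diagonal,
      frobSq_mul_of_transpose_mul_self_eq_one hU, frobSq_mul_of_transpose_mul_self_eq_one hV,
      frobSq_diagonal, frobSq_diagonal, ← Finset.sum_add_distrib, Finset.mul_sum]
    refine Finset.sum_congr rfl fun k _ => ?_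
    have hwk := hw_pos (Fin.castLE hsr k)
    simp only [mul_pow, inv_pow, Real.sq_sqrt (hσ_pos k).le, Real.sq_sqrt hwk.le]
    field_simp
    ring

/-- With `Ã = [U Σ_X^{1/2} W_X^{1/2}, 0]` and `B̃ = [V Σ_X^{1/2} W_X^{-1/2}, 0]`,
one has `Ã B̃ᵀ = X` and `(1/2)(‖Ã W⁻¹‖_F² + ‖B̃‖_F²) = ∑ᵢ σᵢ / Wᵢᵢ`. -/
theorem stmt12 {m n r s : ℕ}
    (w : Fin r → ℝ) (hw_pos : ∀ i, 0 < w i) (hw_mono : Antitone w)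
    (X : Matrix (Fin m) (Fin n) ℝ) (hrank : X.rank = s) (hsr : s ≤ r)
    (U : Matrix (Fin m) (Fin s) ℝ) (V : Matrix (Fin n) (Fin s) ℝ)
    (hU : Uᵀ * U = 1) (hV : Vᵀ * V = 1)
    (σ : Fin s → ℝ) (hσ_pos : ∀ i, 0 < σ i) (hσ_mono : Antitone σ)
    (hX : X = U * Matrix.diagonal σ * Vᵀ) :
    (padCols hsr (U * Matrix.diagonal
        (fun k => Real.sqrt (σ k) * Real.sqrt (w (Fin.castLE hsr k)))) *
      (padCols hsr (V * Matrix.diagonal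
        (fun k => Real.sqrt (σ k) * (Real.sqrt (w (Fin.castLE hsr k)))⁻¹)))ᵀ = X) ∧
    (1/2) * (frobSq (padCols hsr (U * Matrix.diagonal
        (fun k => Real.sqrt (σ k) * Real.sqrt (w (Fin.castLE hsr k)))) *
          (Matrix.diagonal w)⁻¹) +
      frobSq (padCols hsr (V * Matrix.diagonal
        (fun k => Real.sqrt (σ k) * (Real.sqrt (w (Fin.castLE hsr k)))⁻¹)))) =
      ∑ i, σ i / w (Fin.castLE hsr i) :=
  stmt12_general w hw_pos X hsr U V hU hV σ hσ_pos hX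
end
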